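/- arXiv:1904.13133 — 3 statements merged into one kernel-verified Lean document; each statement's English description precedes it below -/
import Mathlib

section
/- Let S be a countable discrete inverse semigroup with identity 1 ∈ S and let μ be a finitely additive probability measure on S. Then μ is invariant (i.e., μ(A) = μ(s⁻¹A) for all s ∈ S, A ⊆ S) if and only if μ(A) = μ(s(A ∩ (s*s)A)) for all s ∈ S and A ⊆ S. -/
/-- Mixin recording that a semigroup with a star operation is an inverse semigroup:
for every `s` the element `star s` is the unique `t` with `s t s = s` and `t s t = t`. -/
class IsInverseSemigroup (S : Type*) [Semigroup S] [Star S] : Prop where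
  mul_star_mul_self : ∀ s : S, s * star s * s = s
  star_mul_self_mul_star : ∀ s : S, star s * s * star s = star s
  star_unique : ∀ s t : S, s * t * s = s → t * s * t = t → t = star s

/-- A finitely additive probability measure on a set `Y`. -/
def IsFinAddProb {Y : Type*} (μ : Set Y → ℝ) : Prop :=
  (∀ A : Set Y, 0 ≤ μ A ∧ μ A ≤ 1) ∧ μ (Set.univ : Set Y) = 1 ∧
    ∀ A B : Set Y, Disjoint A B → μ (A ∪ B) = μ A + μ B

/-- The image `sA` of a subset under left multiplication. -/
def lmulSet {S : Type*} [Mul S] (s : S) (A : Set S) : Set S := (fun t => s * t) '' A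

/-! For an idempotent `e`, the set `A ∩ eA` consists of the points of `A` fixed by `e`. With
`e = s*s` and `f = ss*`, left multiplication by `s` maps the `e`-fixed points bijectively onto
the `f`-fixed points, with inverse `s*`. Hence `s⁻¹(s(A ∩ eA)) = e⁻¹A`, which turns invariance
into the condition, and `s(s⁻¹A ∩ e(s⁻¹A)) = A ∩ fA`; since the condition for the idempotent
`f = f*` reads `μ A = μ (A ∩ fA)`, the condition for `s` on `s⁻¹A` gives back invariance. -/

section Idempotent

variable {S : Type*} [Semigroup S] {e : S}

@[simp]
theorem mem_lmulSet {s u : S} {A : Set S} : u ∈ lmulSet s A ↔ ∃ a ∈ A, s * a = u :=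
  Iff.rfl

theorem IsIdempotentElem.inter_lmulSet_eq (he : IsIdempotentElem e) (A : Set S) :
    A ∩ lmulSet e A = {a ∈ A | e * a = a} := by
  ext a
  simp only [Set.mem_inter_iff, mem_lmulSet, Set.mem_ofPred]
  constructor
  · rintro ⟨haA, b, -, rfl⟩
    exact ⟨haA, by rw [← mul_assoc, he.eq]⟩
  · rintro ⟨haA, hea⟩
    exact ⟨haA, a, haA, hea⟩

theorem IsIdempotentElem.lmulSet_inter_lmulSet (he : IsIdempotentElem e) (A : Set S) :
    lmulSet e (A ∩ lmulSet e A) = A ∩ lmulSet e A := by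
  rw [he.inter_lmulSet_eq]
  ext a
  simp only [mem_lmulSet, Set.mem_ofPred]
  constructor
  · rintro ⟨b, ⟨hbA, heb⟩, rfl⟩
    rw [heb]
    exact ⟨hbA, heb⟩
  · intro ha
    exact ⟨a, ha, ha.2⟩

end Idempotent

namespace IsInverseSemigroup

variable {S : Type*} [Semigroup S] [Star S] [IsInverseSemigroup S]

theorem isIdempotentElem_star_mul_self (s : S) : IsIdempotentElem (star s * s) := by
  rw [IsIdempotentElem, ← mul_assoc, star_mul_self_mul_star]

theorem isIdempotentElem_mul_star_self (s : S) : IsIdempotentElem (s * star s) := by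
  rw [IsIdempotentElem, ← mul_assoc, mul_star_mul_self]

theorem star_eq_self_of_isIdempotentElem {e : S} (he : IsIdempotentElem e) : star e = e :=
  (star_unique e e (by rw [he.eq, he.eq]) (by rw [he.eq, he.eq])).symm

theorem mul_star_mul_self_mul (s t : S) : s * (star s * s * t) = s * t := by
  rw [← mul_assoc, ← mul_assoc, mul_star_mul_self]

theorem preimage_lmulSet_inter_lmulSet (s : S) (A : Set S) :
    {t | s * t ∈ lmulSet s (A ∩ lmulSet (star s * s) A)} = {t | star s * s * t ∈ A} := by
  have he := isIdempotentElem_star_mul_self s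
  rw [he.inter_lmulSet_eq]
  ext t
  simp only [mem_lmulSet, Set.mem_ofPred]
  constructor
  · rintro ⟨b, ⟨hbA, heb⟩, hst⟩
    have het : star s * s * t = star s * s * b := by
      rw [mul_assoc, mul_assoc, hst]
    rwa [het, heb]
  · intro ht
    refine ⟨star s * s * t, ⟨ht, ?_⟩, mul_star_mul_self_mul s t⟩
    rw [← mul_assoc, he.eq]

theorem lmulSet_preimage_inter_lmulSet (s : S) (A : Set S) :
    lmulSet s ({t | s * t ∈ A} ∩ lmulSet (star s * s) {t | s * t ∈ A}) =
      A ∩ lmulSet (s * star s) A := by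
  rw [(isIdempotentElem_star_mul_self s).inter_lmulSet_eq,
    (isIdempotentElem_mul_star_self s).inter_lmulSet_eq]
  ext u
  simp only [mem_lmulSet, Set.mem_ofPred]
  constructor
  · rintro ⟨t, ⟨htA, -⟩, rfl⟩
    exact ⟨htA, by rw [← mul_assoc, mul_star_mul_self]⟩
  · rintro ⟨huA, hfu⟩
    have hst : s * (star s * u) = u := by rw [← mul_assoc, hfu]
    refine ⟨star s * u, ⟨?_, ?_⟩, hst⟩
    · rwa [hst]
    · rw [mul_assoc, hst]

end IsInverseSemigroup

theorem statement6_general (S : Type*) [Monoid S] [Star S] [IsInverseSemigroup S]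
    (μ : Set S → ℝ) :
    (∀ (s : S) (A : Set S), μ A = μ {t | s * t ∈ A}) ↔
    (∀ (s : S) (A : Set S), μ A = μ (lmulSet s (A ∩ lmulSet (star s * s) A))) := by
  constructor
  · intro hinv s A
    calc μ A = μ {t | star s * s * t ∈ A} := hinv _ A
      _ = μ {t | s * t ∈ lmulSet s (A ∩ lmulSet (star s * s) A)} := by
        rw [IsInverseSemigroup.preimage_lmulSet_inter_lmulSet]
      _ = μ (lmulSet s (A ∩ lmulSet (star s * s) A)) := (hinv s _).symm
  · intro hcond s A
    have hf := IsInverseSemigroup.isIdempotentElem_mul_star_self s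
    have hA : μ A = μ (A ∩ lmulSet (s * star s) A) := by
      rw [hcond (s * star s) A, IsInverseSemigroup.star_eq_self_of_isIdempotentElem hf, hf.eq,
        hf.lmulSet_inter_lmulSet]
    rw [hcond s {t | s * t ∈ A}, IsInverseSemigroup.lmulSet_preimage_inter_lmulSet,
      ← hA]

/-- A finitely additive probability measure `μ` on a countable unital inverse semigroup is
invariant (`μ(A) = μ(s⁻¹A)` for all `s`, `A`) if and only if
`μ(A) = μ(s(A ∩ (s*s)A))` for all `s ∈ S` and `A ⊆ S`. -/
theorem statement6 (S : Type*) [Monoid S] [Star S] [IsInverseSemigroup S] [Countable S]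
    (μ : Set S → ℝ) (hμ : IsFinAddProb μ) :
    (∀ (s : S) (A : Set S), μ A = μ {t | s * t ∈ A}) ↔
    (∀ (s : S) (A : Set S), μ A = μ (lmulSet s (A ∩ lmulSet (star s * s) A))) :=
  statement6_general S μ
end

section
/- Let S be a countable discrete inverse semigroup with identity 1 ∈ S and let α be a representation of S on a set X. Then the following are equivalent: (1) X is S-domain measurable; (2) X is not S-paradoxical; (3) X is S-domain Følner. -/
open scoped ENNReal

/-- A representation of a unital inverse semigroup `S` on a set `X`: a unital semigroup
homomorphism into the inverse semigroup of partial bijections of `X` (encoded as `PEquiv`s)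
compatible with the involution.  The domain of the partial bijection `α s` is `D_{s*s}` and
its range is `D_{ss*}`; for an idempotent `e`, `D_e` is the domain of `α e`. -/
structure InverseSemigroupRep (S : Type*) [Monoid S] [Star S] (X : Type*) where
  α : S → X ≃. X
  map_one : α 1 = PEquiv.refl X
  map_star : ∀ s : S, α (star s) = (α s).symm
  map_mul : ∀ s t : S, α (s * t) = (α t).trans (α s)

/-- A finitely additive `[0,∞]`-valued measure on the power set of `X`. -/
def IsFinAddMeasure {X : Type*} (μ : Set X → ℝ≥0∞) : Prop :=
  μ (∅ : Set X) = 0 ∧ ∀ A B : Set X, Disjoint A B → μ (A ∪ B) = μ A + μ B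

namespace InverseSemigroupRep

variable {S X : Type*} [Monoid S] [Star S] (r : InverseSemigroupRep S X)

/-- The domain `D_{s*s}` of the partial bijection `α s`; for an idempotent `e`,
`r.dom e` is the set `D_e`. -/
def dom (s : S) : Set X := {x | ((r.α s) x).isSome}

/-- The image `α_s(B)` of a subset `B ⊆ X` under the partial bijection `α s`. -/
def im (s : S) (B : Set X) : Set X := {y | ∃ x ∈ B, (r.α s) x = some y}

/-- `A ⊆ X` is `S`-domain measurable: there is a finitely additive measure on `𝒫(X)`
normalized at `A` and invariant on domains. -/
def SDomainMeasurableSet (A : Set X) : Prop :=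
  ∃ μ : Set X → ℝ≥0∞, IsFinAddMeasure μ ∧ μ A = 1 ∧
    ∀ (s : S) (B : Set X), B ⊆ r.dom s → μ (r.im s B) = μ B

/-- `A ⊆ X` is `S`-amenable: there is a finitely additive measure on `𝒫(X)` normalized at
`A`, invariant on domains, and localized (`μ(B) = μ(B ∩ D_{t*t})` for all `t`). -/
def SAmenableSet (A : Set X) : Prop :=
  ∃ μ : Set X → ℝ≥0∞, IsFinAddMeasure μ ∧ μ A = 1 ∧
    (∀ (s : S) (B : Set X), B ⊆ r.dom s → μ (r.im s B) = μ B) ∧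
    (∀ (t : S) (B : Set X), μ B = μ (B ∩ r.dom t))

/-- `A ⊆ X` is `S`-paradoxical: `A` admits two disjoint families of pairwise disjoint
subsets, each contained in the appropriate domain, whose images partition `A` twice. -/
def SParadoxical (A : Set X) : Prop :=
  ∃ (n m : ℕ) (s : Fin n → S) (t : Fin m → S) (As : Fin n → Set X) (Bs : Fin m → Set X),
    (∀ i, As i ⊆ A) ∧ (∀ j, Bs j ⊆ A) ∧
    (∀ i, As i ⊆ r.dom (s i)) ∧ (∀ j, Bs j ⊆ r.dom (t j)) ∧
    (∀ i j, i ≠ j → Disjoint (As i) (As j)) ∧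
    (∀ i j, i ≠ j → Disjoint (Bs i) (Bs j)) ∧
    (∀ i j, Disjoint (As i) (Bs j)) ∧
    (∀ i j, i ≠ j → Disjoint (r.im (s i) (As i)) (r.im (s j) (As j))) ∧
    (∀ i j, i ≠ j → Disjoint (r.im (t i) (Bs i)) (r.im (t j) (Bs j))) ∧
    (⋃ i, r.im (s i) (As i)) = A ∧ (⋃ j, r.im (t j) (Bs j)) = A

/-- `A ⊆ X` is `S`-domain Følner: there is a sequence of finite non-empty subsets `F n ⊆ A`
with `|α_s(F n ∩ D_{s*s}) \ F n| / |F n| → 0` for every `s ∈ S`. -/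
def SDomainFolner (A : Set X) : Prop :=
  ∃ F : ℕ → Finset X, (∀ n, (F n).Nonempty) ∧ (∀ n, (F n : Set X) ⊆ A) ∧
    ∀ s : S, Filter.Tendsto
      (fun n => ((r.im s ((F n : Set X) ∩ r.dom s) \ (F n : Set X)).ncard : ℝ) / (F n).card)
      Filter.atTop (nhds 0)

end InverseSemigroupRep

/-!
If `X` carries a domain-invariant mean, the two halves of a paradoxical decomposition would each
have measure `μ X`, so `X` is not paradoxical. A Følner sequence yields such a mean as the limit of
the relative frequencies `|F_n ∩ B| / |F_n|` along an ultrafilter. If there is no Følner sequence,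
some finite `T ⊆ S` expands every finite set by a factor `1 + ε`; a power of `T` then doubles every
finite set, so Hall's marriage theorem gives an injection `X × Bool ↪ X` moving each point by some
`α_p` with `p` in that power; splitting both halves `Φ(X × {b})` according to `p` gives a
paradoxical decomposition of `X`.
-/

open Set Filter Topology Function
open scoped Pointwise

namespace IsFinAddMeasure

variable {X : Type*} {μ : Set X → ℝ≥0∞}

theorem mono (hμ : IsFinAddMeasure μ) {A B : Set X} (h : A ⊆ B) : μ A ≤ μ B := by
  rw [← Set.union_sdiff_cancel h, hμ.2 A (B \ A) Set.disjoint_sdiff_right]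
  exact le_self_add

theorem finset_biUnion (hμ : IsFinAddMeasure μ) {ι : Type*} (f : ι → Set X) (s : Finset ι)
    (hf : (s : Set ι).PairwiseDisjoint f) : μ (⋃ i ∈ s, f i) = ∑ i ∈ s, μ (f i) := by
  classical
  induction s using Finset.induction_on with
  | empty => simpa using hμ.1
  | insert a s ha ih =>
    rw [Finset.coe_insert, pairwiseDisjoint_insert] at hf
    rw [Finset.set_biUnion_insert, Finset.sum_insert ha, hμ.2 _ _ ?_, ih hf.1]
    exact Set.disjoint_iUnion₂_right.2 fun i hi => hf.2 i hi (ne_of_mem_of_not_mem hi ha).symm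

theorem iUnion (hμ : IsFinAddMeasure μ) {ι : Type*} [Fintype ι] (f : ι → Set X)
    (hf : Pairwise (Disjoint on f)) : μ (⋃ i, f i) = ∑ i, μ (f i) := by
  simpa using hμ.finset_biUnion f Finset.univ (hf.set_pairwise _)

theorem of_tendsto {ι : Type*} {l : Filter ι} [l.NeBot] {ν : ι → Set X → ℝ≥0∞}
    (hν : ∀ i, IsFinAddMeasure (ν i)) (hμ : ∀ B, Tendsto (fun i => ν i B) l (𝓝 (μ B))) :
    IsFinAddMeasure μ := by
  refine ⟨tendsto_nhds_unique (hμ ∅) ?_, fun A B h => tendsto_nhds_unique (hμ (A ∪ B)) ?_⟩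
  · simp [(hν _).1]
  · simpa [(hν _).2 A B h] using (hμ A).add (hμ B)

end IsFinAddMeasure

theorem ENNReal.tendsto_natCast_div_of_tendsto_real {ι : Type*} {l : Filter ι} {a b : ι → ℕ}
    (hb : ∀ i, 0 < b i) (h : Tendsto (fun i => (a i : ℝ) / b i) l (𝓝 0)) :
    Tendsto (fun i => (a i : ℝ≥0∞) / b i) l (𝓝 0) := by
  have h' := ENNReal.tendsto_ofReal h
  rw [ENNReal.ofReal_zero] at h'
  refine h'.congr fun i => ?_
  rw [ENNReal.ofReal_div_of_pos (by exact_mod_cast hb i), ENNReal.ofReal_natCast,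
    ENNReal.ofReal_natCast]

namespace Finset

variable {X : Type*}

noncomputable def relFreq (F : Finset X) (B : Set X) : ℝ≥0∞ := ((F : Set X) ∩ B).ncard / F.card

theorem isFinAddMeasure_relFreq (F : Finset X) : IsFinAddMeasure F.relFreq := by
  refine ⟨by simp [relFreq], fun A B h => ?_⟩
  have hfin : ∀ C : Set X, ((F : Set X) ∩ C).Finite := fun C => F.finite_toSet.inter_of_left C
  rw [relFreq, Set.inter_union_distrib_left, Set.ncard_union_eq
    (h.mono Set.inter_subset_right Set.inter_subset_right) (hfin A) (hfin B), Nat.cast_add,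
    ENNReal.add_div, relFreq, relFreq]

theorem relFreq_univ {F : Finset X} (hF : F.Nonempty) : F.relFreq Set.univ = 1 := by
  simp [relFreq, ENNReal.div_self, hF.ne_empty]

end Finset

namespace InverseSemigroupRep

variable {S X : Type*} [Monoid S] [Star S] (r : InverseSemigroupRep S X)

theorem apply_one (x : X) : r.α 1 x = some x := by
  rw [r.map_one]
  rfl

theorem apply_star_of_apply {s : S} {x y : X} (h : r.α s x = some y) :
    r.α (star s) y = some x := by
  rw [r.map_star]
  exact (PEquiv.mem_iff_mem _).2 h

theorem apply_mul_eq_some {s t : S} {x y : X} :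
    r.α (s * t) x = some y ↔ ∃ z, r.α t x = some z ∧ r.α s z = some y := by
  rw [r.map_mul, PEquiv.trans_eq_some]

theorem mem_dom_of_apply {s : S} {x y : X} (h : r.α s x = some y) : x ∈ r.dom s := by
  simp [dom, h]

theorem im_mono {s : S} {B C : Set X} (h : B ⊆ C) : r.im s B ⊆ r.im s C :=
  fun _ ⟨x, hx, hxy⟩ => ⟨x, h hx, hxy⟩

theorem im_subset_dom_star (s : S) (B : Set X) : r.im s B ⊆ r.dom (star s) :=
  fun _ ⟨_, _, h⟩ => r.mem_dom_of_apply (r.apply_star_of_apply h)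

theorem im_star_im {s : S} {B : Set X} (hB : B ⊆ r.dom s) : r.im (star s) (r.im s B) = B := by
  ext x
  constructor
  · rintro ⟨y, ⟨x', hx', hx'y⟩, hyx⟩
    rwa [Option.some.inj ((r.apply_star_of_apply hx'y).symm.trans hyx)] at hx'
  · intro hx
    obtain ⟨y, hy⟩ := Option.isSome_iff_exists.1 (hB hx)
    exact ⟨y, ⟨x, hx, hy⟩, r.apply_star_of_apply hy⟩

theorem im_eq_preimage_image (s : S) (B : Set X) : r.im s B = some ⁻¹' (r.α s '' B) := rfl

theorem ncard_im {s : S} {B : Set X} (hB : B ⊆ r.dom s) : (r.im s B).ncard = B.ncard := by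
  rw [im_eq_preimage_image, Set.ncard_preimage_of_injective_subset_range (Option.some_injective X),
    Set.InjOn.ncard_image]
  · intro x hx x' _ h
    obtain ⟨y, hy⟩ := Option.isSome_iff_exists.1 (hB hx)
    exact (r.α s).inj hy (h ▸ hy)
  · rintro _ ⟨x, hx, rfl⟩
    obtain ⟨y, hy⟩ := Option.isSome_iff_exists.1 (hB hx)
    exact ⟨y, hy.symm⟩

theorem finite_im (s : S) {B : Set X} (hB : B.Finite) : (r.im s B).Finite := by
  rw [im_eq_preimage_image]
  exact (hB.image _).preimage (Option.some_injective X).injOn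

/-- Moving `F ∩ B` by `α_s` loses at most the points that `α_s` pushes out of `F`. -/
theorem ncard_inter_le {s : S} {B F : Set X} (hB : B ⊆ r.dom s) (hF : F.Finite) :
    (F ∩ B).ncard ≤ (F ∩ r.im s B).ncard + (r.im s (F ∩ r.dom s) \ F).ncard := by
  calc (F ∩ B).ncard = (r.im s (F ∩ B)).ncard := (r.ncard_im (Set.inter_subset_right.trans hB)).symm
    _ ≤ ((F ∩ r.im s B) ∪ (r.im s (F ∩ r.dom s) \ F)).ncard := by
        refine Set.ncard_le_ncard (fun y hy => ?_)
          ((hF.inter_of_left _).union (r.finite_im s (hF.inter_of_left _)).sdiff)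
        by_cases hyF : y ∈ F
        · exact Or.inl ⟨hyF, r.im_mono Set.inter_subset_right hy⟩
        · exact Or.inr ⟨r.im_mono (Set.inter_subset_inter_right _ hB) hy, hyF⟩
    _ ≤ _ := Set.ncard_union_le _ _

theorem relFreq_le {s : S} {B : Set X} (hB : B ⊆ r.dom s) (F : Finset X) :
    F.relFreq B ≤ F.relFreq (r.im s B) +
      ((r.im s ((F : Set X) ∩ r.dom s) \ (F : Set X)).ncard : ℝ≥0∞) / F.card := by
  rw [Finset.relFreq, Finset.relFreq, ← ENNReal.add_div, ← Nat.cast_add]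
  exact ENNReal.div_le_div_right (by exact_mod_cast r.ncard_inter_le hB F.finite_toSet) _

theorem not_sParadoxical_of_sDomainMeasurableSet {A : Set X} (h : r.SDomainMeasurableSet A) :
    ¬ r.SParadoxical A := by
  obtain ⟨μ, hμ, hA, hinv⟩ := h
  rintro ⟨n, m, s, t, As, Bs, hAsA, hBsA, hAsdom, hBsdom, hAsdisj, hBsdisj, hAsBs, hAsim, hBsim,
    hAscov, hBscov⟩
  have hAs : μ (⋃ i, As i) = 1 := by
    rw [hμ.iUnion As hAsdisj, ← hA, ← hAscov, hμ.iUnion _ hAsim]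
    exact Finset.sum_congr rfl fun i _ => (hinv _ _ (hAsdom i)).symm
  have hBs : μ (⋃ j, Bs j) = 1 := by
    rw [hμ.iUnion Bs hBsdisj, ← hA, ← hBscov, hμ.iUnion _ hBsim]
    exact Finset.sum_congr rfl fun j _ => (hinv _ _ (hBsdom j)).symm
  have hle : μ ((⋃ i, As i) ∪ ⋃ j, Bs j) ≤ μ A :=
    hμ.mono (Set.union_subset (Set.iUnion_subset hAsA) (Set.iUnion_subset hBsA))
  rw [hμ.2 _ _ (Set.disjoint_iUnion_left.2 fun i => Set.disjoint_iUnion_right.2 (hAsBs i)), hAs,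
    hBs, hA] at hle
  norm_num at hle

theorem sDomainMeasurableSet_univ_of_sDomainFolner (h : r.SDomainFolner Set.univ) :
    r.SDomainMeasurableSet Set.univ := by
  obtain ⟨F, hne, -, hF⟩ := h
  let U := Ultrafilter.of (atTop : Filter ℕ)
  let μ : Set X → ℝ≥0∞ := fun B => (U.map fun n => (F n).relFreq B).lim
  have hμ : ∀ B, Tendsto (fun n => (F n).relFreq B) U (𝓝 (μ B)) :=
    fun B => Ultrafilter.le_nhds_lim _
  have hbd : ∀ s : S, Tendsto (fun n =>
      ((r.im s ((F n : Set X) ∩ r.dom s) \ (F n : Set X)).ncard : ℝ≥0∞) / (F n).card) U (𝓝 0) :=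
    fun s => (ENNReal.tendsto_natCast_div_of_tendsto_real (fun n => (hne n).card_pos)
      (hF s)).mono_left (Ultrafilter.of_le _)
  have hle : ∀ {s : S} {B : Set X}, B ⊆ r.dom s → μ B ≤ μ (r.im s B) := fun {s B} hB => by
    simpa using le_of_tendsto_of_tendsto' (hμ B) ((hμ _).add (hbd s)) fun n => r.relFreq_le hB _
  refine ⟨μ, IsFinAddMeasure.of_tendsto (fun n => (F n).isFinAddMeasure_relFreq) hμ,
    tendsto_nhds_unique (hμ _) ?_, fun s B hB => ?_⟩
  · simp [Finset.relFreq_univ (hne _)]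
  · exact le_antisymm (by simpa [r.im_star_im hB] using hle (r.im_subset_dom_star s B)) (hle hB)

section Finite

variable [DecidableEq X]

def imFinset (s : S) (F : Finset X) : Finset X := F.biUnion fun x => (r.α s x).toFinset

theorem mem_imFinset {s : S} {F : Finset X} {y : X} :
    y ∈ r.imFinset s F ↔ ∃ x ∈ F, r.α s x = some y := by
  simp [imFinset]

theorem coe_imFinset (s : S) (F : Finset X) :
    (r.imFinset s F : Set X) = r.im s ((F : Set X) ∩ r.dom s) := by
  ext y
  simp only [Finset.mem_coe, mem_imFinset]
  exact ⟨fun ⟨x, hx, h⟩ => ⟨x, ⟨hx, r.mem_dom_of_apply h⟩, h⟩, fun ⟨x, ⟨hx, _⟩, h⟩ => ⟨x, hx, h⟩⟩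

theorem ncard_boundary (s : S) (F : Finset X) :
    (r.im s ((F : Set X) ∩ r.dom s) \ (F : Set X)).ncard = (r.imFinset s F \ F).card := by
  rw [← coe_imFinset, ← Finset.coe_sdiff, Set.ncard_coe_finset]

theorem imFinset_one (F : Finset X) : r.imFinset 1 F = F := by
  ext y
  simp [mem_imFinset, apply_one]

def nbhd (T : Finset S) (F : Finset X) : Finset X := T.biUnion fun s => r.imFinset s F

theorem mem_nbhd {T : Finset S} {F : Finset X} {y : X} :
    y ∈ r.nbhd T F ↔ ∃ s ∈ T, ∃ x ∈ F, r.α s x = some y := by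
  simp [nbhd, mem_imFinset]

theorem nbhd_one (F : Finset X) : r.nbhd 1 F = F := by
  simp [nbhd, ← Finset.singleton_one, imFinset_one]

theorem nbhd_nbhd_subset [DecidableEq S] (T T' : Finset S) (F : Finset X) :
    r.nbhd T (r.nbhd T' F) ⊆ r.nbhd (T * T') F := by
  intro y hy
  obtain ⟨s, hs, z, hz, hzy⟩ := r.mem_nbhd.1 hy
  obtain ⟨t, ht, x, hx, hxz⟩ := r.mem_nbhd.1 hz
  refine r.mem_nbhd.2 ⟨s * t, Finset.mul_mem_mul hs ht, x, hx, ?_⟩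
  exact r.apply_mul_eq_some.2 ⟨z, hxz, hzy⟩

theorem card_add_card_boundary_le {T : Finset S} {s : S} (h1 : 1 ∈ T) (hs : s ∈ T)
    (F : Finset X) : F.card + (r.imFinset s F \ F).card ≤ (r.nbhd T F).card := by
  rw [← Finset.card_union_of_disjoint Finset.disjoint_sdiff]
  refine Finset.card_le_card (Finset.union_subset ?_ ?_)
  · calc F = r.imFinset 1 F := (r.imFinset_one F).symm
      _ ⊆ r.nbhd T F := Finset.subset_biUnion_of_mem (fun s => r.imFinset s F) h1
  · exact Finset.sdiff_subset.trans (Finset.subset_biUnion_of_mem (fun s => r.imFinset s F) hs)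

/-- Otherwise the sets that almost fail to expand under the first `n` elements of an enumeration
of `S` would form a Følner sequence. -/
theorem exists_expanding_of_not_sDomainFolner [Countable S] (h : ¬ r.SDomainFolner Set.univ) :
    ∃ (T : Finset S) (ε : ℝ), 0 < ε ∧ ∀ F : Finset X, (1 + ε) * F.card ≤ (r.nbhd T F).card := by
  classical
  obtain ⟨e, he⟩ := exists_surjective_nat S
  by_contra! hcon
  let T : ℕ → Finset S := fun n => insert 1 ((Finset.range (n + 1)).image e)
  choose F hF using fun n : ℕ => hcon (T n) (1 / (n + 1)) (by positivity)
  have hne : ∀ n, (F n).Nonempty := fun n =>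
    Finset.nonempty_iff_ne_empty.2 fun h0 => (hF n).not_ge (by simp [h0])
  refine h ⟨F, hne, fun _ => Set.subset_univ _, fun s => ?_⟩
  obtain ⟨k, rfl⟩ := he s
  refine squeeze_zero' (Eventually.of_forall fun n => by positivity) ?_
    tendsto_one_div_add_atTop_nhds_zero_nat
  filter_upwards [eventually_ge_atTop k] with n hn
  have hpos : (0 : ℝ) < (F n).card := by exact_mod_cast (hne n).card_pos
  have hcard :
      ((F n).card : ℝ) + (r.imFinset (e k) (F n) \ F n).card ≤ (r.nbhd (T n) (F n)).card := by
    exact_mod_cast r.card_add_card_boundary_le (Finset.mem_insert_self 1 _)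
      (Finset.mem_insert_of_mem (Finset.mem_image_of_mem e (Finset.mem_range.2 (by omega)))) (F n)
  rw [r.ncard_boundary, div_le_iff₀ hpos]
  nlinarith [hF n]

theorem exists_doubling {T : Finset S} {ε : ℝ} (hε : 0 < ε)
    (hT : ∀ F : Finset X, (1 + ε) * F.card ≤ (r.nbhd T F).card) :
    ∃ P : Finset S, ∀ F : Finset X, 2 * F.card ≤ (r.nbhd P F).card := by
  classical
  have hpow : ∀ (m : ℕ) (F : Finset X), (1 + ε) ^ m * F.card ≤ (r.nbhd (T ^ m) F).card := by
    intro m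
    induction m with
    | zero => simp [nbhd_one]
    | succ m ih =>
      intro F
      calc (1 + ε) ^ (m + 1) * F.card = (1 + ε) * ((1 + ε) ^ m * F.card) := by ring
        _ ≤ (1 + ε) * (r.nbhd (T ^ m) F).card := mul_le_mul_of_nonneg_left (ih F) (by linarith)
        _ ≤ (r.nbhd T (r.nbhd (T ^ m) F)).card := hT _
        _ ≤ (r.nbhd (T ^ (m + 1)) F).card := by
          rw [pow_succ']
          exact_mod_cast Finset.card_le_card (r.nbhd_nbhd_subset _ _ _)
  obtain ⟨j, hj⟩ := pow_unbounded_of_one_lt (2 : ℝ) (by linarith : (1 : ℝ) < 1 + ε)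
  refine ⟨T ^ j, fun F => ?_⟩
  have : (2 : ℝ) * F.card ≤ (r.nbhd (T ^ j) F).card :=
    (mul_le_mul_of_nonneg_right hj.le (by positivity)).trans (hpow j F)
  exact_mod_cast this

theorem exists_injective_of_doubling {P : Finset S}
    (hP : ∀ F : Finset X, 2 * F.card ≤ (r.nbhd P F).card) :
    ∃ Φ : X × Bool → X, Injective Φ ∧ ∀ q, Φ q ∈ r.nbhd P {q.1} := by
  refine (Finset.all_card_le_biUnion_card_iff_exists_injective _).1 fun W => ?_
  have hW : W.biUnion (fun q => r.nbhd P {q.1}) = r.nbhd P (W.image Prod.fst) := by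
    ext y
    simp only [Finset.mem_biUnion, mem_nbhd, Finset.mem_singleton, Finset.mem_image]
    grind
  calc W.card ≤ (W.image Prod.fst).card * (W.image Prod.snd).card :=
        (Finset.card_le_card Finset.subset_product).trans_eq (Finset.card_product _ _)
    _ ≤ (W.image Prod.fst).card * 2 := Nat.mul_le_mul_left _ (Finset.card_le_univ _)
    _ ≤ _ := by rw [hW, mul_comm]; exact hP _

end Finite

theorem sParadoxical_univ_of_injective {n : ℕ} {p : Fin n → S} {Φ : X × Bool → X}
    (hΦ : Injective Φ) {idx : X × Bool → Fin n} (hidx : ∀ q, r.α (p (idx q)) q.1 = some (Φ q)) :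
    r.SParadoxical Set.univ := by
  let piece : Bool → Fin n → Set X := fun b i => (fun x => Φ (x, b)) '' {x | idx (x, b) = i}
  have him : ∀ b i, r.im (star (p i)) (piece b i) = {x | idx (x, b) = i} := by
    intro b i
    ext x
    constructor
    · rintro ⟨_, ⟨x', rfl, rfl⟩, h⟩
      obtain rfl : x' = x := Option.some.inj ((r.apply_star_of_apply (hidx _)).symm.trans h)
      rfl
    · rintro (rfl : idx (x, b) = i)
      exact ⟨_, ⟨x, rfl, rfl⟩, r.apply_star_of_apply (hidx _)⟩
  have hdom : ∀ b i, piece b i ⊆ r.dom (star (p i)) := by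
    rintro b _ _ ⟨x, rfl, rfl⟩
    exact r.mem_dom_of_apply (r.apply_star_of_apply (hidx _))
  have hdisj : ∀ b b' i j, (b, i) ≠ (b', j) → Disjoint (piece b i) (piece b' j) := by
    rintro b b' _ _ hne
    refine Set.disjoint_left.2 ?_
    rintro _ ⟨x, rfl, rfl⟩ ⟨x', rfl, h⟩
    obtain ⟨rfl, rfl⟩ := Prod.mk.inj (hΦ h)
    exact hne rfl
  have himdisj : ∀ b i j, i ≠ j →
      Disjoint (r.im (star (p i)) (piece b i)) (r.im (star (p j)) (piece b j)) := by
    intro b i j hij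
    rw [him, him]
    exact Set.disjoint_left.2 fun x hi hj => hij (hi.symm.trans hj)
  have hcover : ∀ b, ⋃ i, r.im (star (p i)) (piece b i) = Set.univ := fun b => by
    simp only [him]
    exact Set.eq_univ_of_forall fun x => Set.mem_iUnion.2 ⟨idx (x, b), rfl⟩
  exact ⟨n, n, fun i => star (p i), fun i => star (p i), piece false, piece true,
    fun _ => Set.subset_univ _, fun _ => Set.subset_univ _, hdom false, hdom true,
    fun i j h => hdisj _ _ i j (by simp [h]), fun i j h => hdisj _ _ i j (by simp [h]),
    fun i j => hdisj _ _ i j (by simp), himdisj false, himdisj true, hcover false, hcover true⟩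

theorem sParadoxical_univ_of_not_sDomainFolner [Countable S] (h : ¬ r.SDomainFolner Set.univ) :
    r.SParadoxical Set.univ := by
  classical
  obtain ⟨T, ε, hε, hT⟩ := r.exists_expanding_of_not_sDomainFolner h
  obtain ⟨P, hP⟩ := r.exists_doubling hε hT
  obtain ⟨Φ, hΦ, hmem⟩ := r.exists_injective_of_doubling hP
  have hidx : ∀ q : X × Bool, ∃ i : Fin P.card, r.α (P.equivFin.symm i) q.1 = some (Φ q) := by
    intro q
    obtain ⟨s, hs, x, hx, hxs⟩ := r.mem_nbhd.1 (hmem q)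
    rw [Finset.mem_singleton] at hx
    subst hx
    exact ⟨P.equivFin ⟨s, hs⟩, by simpa using hxs⟩
  choose idx hidx using hidx
  exact r.sParadoxical_univ_of_injective (p := fun i => P.equivFin.symm i) hΦ hidx

end InverseSemigroupRep

theorem statement8_general {S X : Type*} [Monoid S] [Star S] [Countable S]
    (r : InverseSemigroupRep S X) :
    (r.SDomainMeasurableSet (Set.univ : Set X) ↔ ¬ r.SParadoxical (Set.univ : Set X)) ∧
    (r.SDomainMeasurableSet (Set.univ : Set X) ↔ r.SDomainFolner (Set.univ : Set X)) := by
  have hmeas := r.not_sParadoxical_of_sDomainMeasurableSet (A := Set.univ)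
  have hfol := r.sDomainMeasurableSet_univ_of_sDomainFolner
  have hpar := r.sParadoxical_univ_of_not_sDomainFolner
  tauto

/-- For a representation of a countable discrete unital inverse semigroup `S` on a set `X`,
the following are equivalent: (1) `X` is `S`-domain measurable; (2) `X` is not
`S`-paradoxical; (3) `X` is `S`-domain Følner. -/
theorem statement8 {S X : Type*} [Monoid S] [Star S] [IsInverseSemigroup S] [Countable S]
    (r : InverseSemigroupRep S X) :
    (r.SDomainMeasurableSet (Set.univ : Set X) ↔ ¬ r.SParadoxical (Set.univ : Set X)) ∧
    (r.SDomainMeasurableSet (Set.univ : Set X) ↔ r.SDomainFolner (Set.univ : Set X)) :=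
  statement8_general r
end

section
/- Let α be a representation of a countable discrete unital inverse semigroup S on a set X. If X is S-domain measurable, then for every ε > 0 and every finite subset 𝓕 ⊆ S there is a function h : X → [0,∞) with finite support and ∑_{x∈X} h(x) = 1 such that ∑_{x∈X} |(s*·h)(x) − ((s*s)·h)(x)| < ε for every s ∈ 𝓕. -/
open scoped ENNReal

namespace InverseSemigroupRep

variable {S X : Type*} [Monoid S] [Star S] (r : InverseSemigroupRep S X)

/-- The action of `S` on real-valued functions on `X`:
`(t·f)(x) = f(α_{t*}(x))` if `x ∈ D_{t t*}` and `0` otherwise. -/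
def act (t : S) (f : X → ℝ) (x : X) : ℝ := ((r.α (star t)) x).elim 0 f

end InverseSemigroupRep

/-!
Suppose the conclusion fails for `ε` and `𝓕`. For a finitely supported probability density `h`,
the vector `(s*·h − (s*s)·h)_{s ∈ 𝓕}` of `(ℓ¹ X)^𝓕` then has norm at least `ε`, so these vectors
form a convex set disjoint from the `ε`-ball, and Hahn–Banach separates the two. The separating
functional is given by bounded functions `φ_s`; evaluating it at point masses shows
`δ ≤ ∑_s (s·φ_s − (s*s)·φ_s)` everywhere for some `δ > 0`. Replacing `φ_s` by nearby
finite-range functions keeps this with `δ / 2`, and integrating against the invariant finitely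
additive measure `μ` gives a contradiction: `α_s` maps the level sets of `φ_s` inside `D_{s*s}`
onto those of `s·φ_s`, so every summand integrates to `0`.
-/

open Function Set MeasureTheory

theorem IsFinAddMeasure.mono_s10 {X : Type*} {μ : Set X → ℝ≥0∞} (hμ : IsFinAddMeasure μ)
    {A B : Set X} (hAB : A ⊆ B) : μ A ≤ μ B := by
  rw [← union_sdiff_cancel hAB, hμ.2 _ _ disjoint_sdiff_right]
  exact le_self_add

namespace MeasureTheory.SimpleFunc

variable {X : Type*} [MeasurableSpace X]

theorem coe_sum {ι : Type*} (I : Finset ι) (f : ι → SimpleFunc X ℝ) :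
    ⇑(∑ i ∈ I, f i) = ∑ i ∈ I, ⇑(f i) :=
  map_sum (AddMonoidHom.mk' (⇑) coe_add : SimpleFunc X ℝ →+ X → ℝ) f I

noncomputable def finAddIntegral (μ : Set X → ℝ≥0∞) (f : SimpleFunc X ℝ) : ℝ :=
  f.setToSimpleFunc fun A => (μ A).toReal • ContinuousLinearMap.id ℝ ℝ

variable {μ : Set X → ℝ≥0∞}

theorem finAddIntegral_congr_preimage_singleton (hμ₀ : μ ∅ = 0) {f g : SimpleFunc X ℝ}
    (hfg : ∀ c ≠ 0, μ (f ⁻¹' {c}) = μ (g ⁻¹' {c})) :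
    finAddIntegral μ f = finAddIntegral μ g := by
  classical
  have hT : (μ ∅).toReal • ContinuousLinearMap.id ℝ ℝ = 0 := by simp [hμ₀]
  unfold finAddIntegral
  rw [setToSimpleFunc_eq_sum_of_subset _ hT (s := f.range ∪ g.range)
      (Finset.filter_subset _ _ |>.trans Finset.subset_union_left),
    setToSimpleFunc_eq_sum_of_subset _ hT (s := f.range ∪ g.range)
      (Finset.filter_subset _ _ |>.trans Finset.subset_union_right)]
  refine Finset.sum_congr rfl fun c _ => ?_
  rcases eq_or_ne c 0 with rfl | hc
  · simp
  · rw [hfg c hc]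

theorem finAddIntegral_const (hμ₀ : μ ∅ = 0) (c : ℝ) :
    finAddIntegral μ (const X c) = (μ univ).toReal * c := by
  rw [finAddIntegral, setToSimpleFunc_const _ (by simp [hμ₀])]
  simp

variable (hμ : IsFinAddMeasure μ) (hfin : ∀ A, μ A ≠ ∞)
include hμ hfin

/- `FinMeasAdditive` refers to a measure only to single out the sets of finite measure; for the zero
measure that is every set, so it just says that `A ↦ (μ A).toReal` is finitely additive. -/
theorem finMeasAdditive_toReal_smul_id :
    FinMeasAdditive (0 : Measure X) fun A => (μ A).toReal • ContinuousLinearMap.id ℝ ℝ := by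
  intro A B _ _ _ _ hAB
  dsimp only
  rw [hμ.2 A B hAB, ENNReal.toReal_add (hfin A) (hfin B), add_smul]

theorem finAddIntegral_add (f g : SimpleFunc X ℝ) :
    finAddIntegral μ (f + g) = finAddIntegral μ f + finAddIntegral μ g :=
  setToSimpleFunc_add _ (finMeasAdditive_toReal_smul_id hμ hfin)
    integrable_zero_measure integrable_zero_measure

theorem finAddIntegral_sub (f g : SimpleFunc X ℝ) :
    finAddIntegral μ (f - g) = finAddIntegral μ f - finAddIntegral μ g :=
  setToSimpleFunc_sub _ (finMeasAdditive_toReal_smul_id hμ hfin)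
    integrable_zero_measure integrable_zero_measure

theorem finAddIntegral_sum {ι : Type*} (I : Finset ι) (f : ι → SimpleFunc X ℝ) :
    finAddIntegral μ (∑ i ∈ I, f i) = ∑ i ∈ I, finAddIntegral μ (f i) :=
  map_sum (AddMonoidHom.mk' (finAddIntegral μ) (finAddIntegral_add hμ hfin)) f I

theorem finAddIntegral_mono {f g : SimpleFunc X ℝ} (hfg : f ≤ g) :
    finAddIntegral μ f ≤ finAddIntegral μ g :=
  setToSimpleFunc_mono (finMeasAdditive_toReal_smul_id hμ hfin)
    (fun _ _ _ _ hx => mul_nonneg ENNReal.toReal_nonneg hx)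
    integrable_zero_measure integrable_zero_measure hfg

end MeasureTheory.SimpleFunc

namespace PEquiv

variable {α β R M : Type*}

section Module

variable [Semiring R] [AddCommMonoid M] [Module R M]

variable (R) in
def pullback (e : α ≃. β) : (β → M) →ₗ[R] α → M where
  toFun f a := (e a).elim 0 f
  map_add' f g := funext fun a => by rcases h : e a <;> simp [h]
  map_smul' c f := funext fun a => by rcases h : e a <;> simp [h]

@[simp]
theorem pullback_apply (e : α ≃. β) (f : β → M) (a : α) :
    e.pullback R f a = (e a).elim 0 f := rfl

theorem pullback_ofSet (s : Set α) [DecidablePred (· ∈ s)] (f : α → M) :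
    (ofSet s).pullback R f = s.indicator f := by
  ext a
  by_cases ha : a ∈ s <;> simp [ofSet, ha]

theorem range_pullback_subset (e : α ≃. β) (f : β → M) :
    range (e.pullback R f) ⊆ insert 0 (range f) := by
  rintro _ ⟨a, rfl⟩
  rcases h : e a <;> simp [h]

theorem finite_support_pullback (e : α ≃. β) {f : β → M} (hf : (support f).Finite) :
    (support (e.pullback R f)).Finite := by
  refine ((hf.image e.symm).preimage (Option.some_injective _).injOn).subset ?_
  intro a ha
  rcases hb : e a with _ | b
  · simp [hb] at ha
  · exact ⟨b, by simpa [hb] using ha, e.eq_some_iff.mpr hb⟩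

theorem pullback_single [DecidableEq α] [DecidableEq β] (e : α ≃. β) (b : β) (m : M) :
    e.pullback R (Pi.single b m) = (e.symm b).elim 0 fun a => Pi.single a m := by
  ext a
  rcases h : e.symm b with _ | a'
  · rcases ha : e a with _ | b'
    · simp [ha]
    · have hb' : b' ≠ b := by rintro rfl; simp [e.eq_some_iff.mpr ha] at h
      simp [ha, hb']
  · have := e.eq_some_iff.mp h
    by_cases ha : a = a'
    · subst ha; simp [this]
    · rcases ha' : e a with _ | b'
      · simp [ha', ha]
      · have hb' : b' ≠ b := by
          rintro rfl
          exact ha (Option.some_injective _ ((e.eq_some_iff.mpr ha').symm.trans h))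
        simp [ha', hb', ha]

theorem pullback_symm_preimage_singleton (e : α ≃. β) (f : α → M) {c : M} (hc : c ≠ 0) :
    e.symm.pullback R f ⁻¹' {c} = {b | ∃ a ∈ f ⁻¹' {c} ∩ {a | (e a).isSome}, e a = some b} := by
  ext b
  rcases h : e.symm b with _ | a
  · simp only [mem_preimage, pullback_apply, h, Option.elim_none, mem_singleton_iff,
      mem_ofPred_eq, Ne.symm hc, false_iff]
    rintro ⟨a, -, hab⟩
    simp [e.eq_some_iff.mpr hab] at h
  · have hab := e.eq_some_iff.mp h
    simp only [mem_preimage, pullback_apply, h, Option.elim_some, mem_singleton_iff]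
    constructor
    · intro hfa
      exact ⟨a, ⟨hfa, by simp [hab]⟩, hab⟩
    · rintro ⟨a', ⟨hfa', -⟩, ha'⟩
      rwa [e.inj ha' hab] at hfa'

theorem pullback_self_trans_symm_preimage_singleton (e : α ≃. β) (f : α → M) {c : M}
    (hc : c ≠ 0) :
    (e.trans e.symm).pullback R f ⁻¹' {c} = f ⁻¹' {c} ∩ {a | (e a).isSome} := by
  rw [self_trans_symm, pullback_ofSet, indicator_preimage_of_notMem _ _ (by simpa using hc.symm)]

end Module

theorem norm_pullback_le [SeminormedAddCommGroup M] [Module ℝ M] (e : α ≃. β) {f : β → M} {C : ℝ}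
    (hC : 0 ≤ C) (hf : ∀ b, ‖f b‖ ≤ C) (a : α) : ‖e.pullback ℝ f a‖ ≤ C := by
  rcases h : e a <;> simp [h, hC, hf]

end PEquiv

namespace InverseSemigroupRep

variable {S X : Type*} [Monoid S] [Star S] (r : InverseSemigroupRep S X)

theorem α_star_star (s : S) : r.α (star (star s)) = r.α s := by
  rw [r.map_star, r.map_star, PEquiv.symm_symm]

theorem α_star_mul_self (s : S) : r.α (star s * s) = (r.α s).trans (r.α s).symm := by
  rw [r.map_mul, r.map_star]

theorem symm_α_star_mul_self (s : S) : (r.α (star s * s)).symm = r.α (star s * s) := by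
  rw [α_star_mul_self, PEquiv.symm_trans_rev, PEquiv.symm_symm]

noncomputable def defect (s : S) : (X → ℝ) →ₗ[ℝ] X → ℝ :=
  (r.α s).pullback ℝ - (r.α (star s * s)).pullback ℝ

noncomputable def dualDefect (s : S) : (X → ℝ) →ₗ[ℝ] X → ℝ :=
  (r.α s).symm.pullback ℝ - (r.α (star s * s)).pullback ℝ

theorem act_star_sub_act_star_mul_self (s : S) (h : X → ℝ) (x : X) :
    r.act (star s) h x - r.act (star s * s) h x = r.defect s h x := by
  change (r.α (star (star s))).pullback ℝ h x - (r.α (star (star s * s))).pullback ℝ h x = _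
  rw [α_star_star, r.map_star, symm_α_star_mul_self]
  rfl

theorem finite_support_defect (s : S) {h : X → ℝ} (hh : (support h).Finite) :
    (support (r.defect s h)).Finite :=
  ((PEquiv.finite_support_pullback _ hh).union
    (PEquiv.finite_support_pullback _ hh)).subset (support_sub _ _)

theorem finsum_defect_single_mul [DecidableEq X] (s : S) (x : X) (φ : X → ℝ) :
    ∑ᶠ y, r.defect s (Pi.single x 1) y * φ y = r.dualDefect s φ x := by
  have hpair : ∀ o : Option X, ∑ᶠ y, o.elim 0 (fun z => Pi.single z (1 : ℝ)) y * φ y = o.elim 0 φ := by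
    rintro (_ | z)
    · simp
    · rw [finsum_eq_single _ z fun y hy => by simp [hy]]
      simp
  have hfin : ∀ o : Option X,
      (support fun y => o.elim 0 (fun z => Pi.single z (1 : ℝ)) y * φ y).Finite := by
    rintro (_ | z)
    · simp
    · exact (finite_singleton z).subset fun y hy => by
        by_contra hyz
        simp [Pi.single_apply, show y ≠ z from hyz] at hy
  simp only [defect, dualDefect, LinearMap.sub_apply, Pi.sub_apply, PEquiv.pullback_single, sub_mul]
  rw [finsum_sub_distrib (hfin _) (hfin _), hpair, hpair, symm_α_star_mul_self]
  rfl

theorem abs_dualDefect_sub_le (s : S) {φ ψ : X → ℝ} {η : ℝ} (hφψ : ∀ y, |φ y - ψ y| ≤ η)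
    (x : X) : |r.dualDefect s φ x - r.dualDefect s ψ x| ≤ 2 * η := by
  have hη : 0 ≤ η := (abs_nonneg _).trans (hφψ x)
  have hbound : ∀ e : X ≃. X, |e.pullback ℝ (φ - ψ) x| ≤ η := fun e =>
    e.norm_pullback_le (f := φ - ψ) hη hφψ x
  rw [← Pi.sub_apply, ← map_sub, dualDefect, LinearMap.sub_apply, Pi.sub_apply, two_mul]
  exact (abs_sub _ _).trans (add_le_add (hbound _) (hbound _))

end InverseSemigroupRep

def finsuppStdSimplex (X : Type*) : Set (X → ℝ) :=
  {h | (support h).Finite ∧ (∀ x, 0 ≤ h x) ∧ ∑ᶠ x, h x = 1}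

theorem convex_finsuppStdSimplex (X : Type*) : Convex ℝ (finsuppStdSimplex X) := by
  rintro h₁ ⟨hfin₁, hnn₁, hsum₁⟩ h₂ ⟨hfin₂, hnn₂, hsum₂⟩ a b ha hb hab
  have hfa : (support (a • h₁)).Finite := hfin₁.subset (support_smul_subset_right _ _)
  have hfb : (support (b • h₂)).Finite := hfin₂.subset (support_smul_subset_right _ _)
  refine ⟨(hfa.union hfb).subset (support_add _ _), fun x => ?_, ?_⟩
  · simp only [Pi.add_apply, Pi.smul_apply, smul_eq_mul]
    exact add_nonneg (mul_nonneg ha (hnn₁ x)) (mul_nonneg hb (hnn₂ x))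
  · simp only [Pi.add_apply]
    rw [finsum_add_distrib hfa hfb]
    simp only [Pi.smul_apply, smul_eq_mul]
    rw [← mul_finsum, ← mul_finsum, hsum₁, hsum₂, mul_one, mul_one, hab]

theorem single_mem_finsuppStdSimplex {X : Type*} [DecidableEq X] (x : X) :
    Pi.single x 1 ∈ finsuppStdSimplex X := by
  refine ⟨(finite_singleton x).subset Pi.support_single_subset, fun y => ?_, ?_⟩
  · by_cases hy : y = x <;> simp [hy]
  · rw [finsum_eq_single _ x fun y hy => by simp [hy]]
    simp

namespace lp

variable {X : Type*}

theorem finsum_abs_le_norm (w : lp (fun _ : X => ℝ) 1) : ∑ᶠ y, |w y| ≤ ‖w‖ := by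
  by_cases hw : (support fun y => |w y|).Finite
  · rw [finsum_eq_sum _ hw]
    simpa using lp.sum_rpow_le_norm_rpow (p := 1) (by norm_num) w hw.toFinset
  · rw [finsum_of_infinite_support hw]
    exact norm_nonneg _

theorem map_eq_finsum_mul_map_single [DecidableEq X] {p : ℝ≥0∞}
    (g : lp (fun _ : X => ℝ) p →ₗ[ℝ] ℝ) (w : lp (fun _ : X => ℝ) p)
    (hw : (support w).Finite) :
    g w = ∑ᶠ y, w y * g (lp.single p y 1) := by
  have hsum : w = ∑ y ∈ hw.toFinset, lp.single p y (w y) := by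
    ext j
    rw [lp.coeFn_sum, Finset.sum_apply, Finset.sum_eq_single j (fun y _ hy => by simp [hy.symm])
      (fun hj => by simpa using hj)]
    simp
  conv_lhs => rw [hsum]
  rw [map_sum, finsum_eq_sum_of_support_subset _
    ((support_mul_subset_left _ _).trans hw.coe_toFinset.symm.subset)]
  refine Finset.sum_congr rfl fun y _ => ?_
  have : lp.single p y (w y) = w y • lp.single (E := fun _ : X => ℝ) p y 1 := by
    rw [← lp.single_smul, smul_eq_mul, mul_one]
  rw [this, map_smul, smul_eq_mul]

end lp

theorem exists_pos_le_map_of_forall_le_norm {E : Type*} [NormedAddCommGroup E] [NormedSpace ℝ E]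
    {C : Set E} (hC : Convex ℝ C) {ε : ℝ} (hε : 0 < ε) (hCε : ∀ v ∈ C, ε ≤ ‖v‖) :
    ∃ (f : StrongDual ℝ E) (u : ℝ), 0 < u ∧ ∀ v ∈ C, u ≤ f v := by
  obtain ⟨f, u, hfu, hfC⟩ := geometric_hahn_banach_open (convex_ball 0 ε) Metric.isOpen_ball hC
    (disjoint_left.2 fun v hv hvC => (mem_ball_zero_iff.mp hv).not_ge (hCε v hvC))
  exact ⟨f, u, by simpa using hfu 0 (Metric.mem_ball_self hε), hfC⟩

namespace InverseSemigroupRep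

variable {S X : Type*} [Monoid S] [Star S] (r : InverseSemigroupRep S X)

theorem exists_le_sum_dualDefect_of_le_defect {ι : Type*} [Fintype ι] (s : ι → S) {ε : ℝ}
    (hε : 0 < ε) (hT : ∀ h ∈ finsuppStdSimplex X, ∃ i, ε ≤ ∑ᶠ y, |r.defect (s i) h y|) :
    ∃ (φ : ι → X → ℝ) (M δ : ℝ), 0 < δ ∧ (∀ i y, |φ i y| ≤ M) ∧
      ∀ x, δ ≤ ∑ i, r.dualDefect (s i) (φ i) x := by
  classical
  let C : Set (ι → lp (fun _ : X => ℝ) 1) :=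
    {v | ∃ h ∈ finsuppStdSimplex X, ∀ i, ⇑(v i) = r.defect (s i) h}
  have hC : Convex ℝ C := by
    rintro v₁ ⟨h₁, hh₁, hv₁⟩ v₂ ⟨h₂, hh₂, hv₂⟩ a b ha hb hab
    refine ⟨a • h₁ + b • h₂, convex_finsuppStdSimplex X hh₁ hh₂ ha hb hab, fun i => ?_⟩
    rw [Pi.add_apply, Pi.smul_apply, Pi.smul_apply, lp.coeFn_add, lp.coeFn_smul, lp.coeFn_smul,
      hv₁ i, hv₂ i, map_add, map_smul, map_smul]
  have hCε : ∀ v ∈ C, ε ≤ ‖v‖ := by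
    rintro v ⟨h, hh, hvh⟩
    obtain ⟨i, hi⟩ := hT h hh
    calc ε ≤ ∑ᶠ y, |r.defect (s i) h y| := hi
      _ = ∑ᶠ y, |v i y| := by rw [hvh i]
      _ ≤ ‖v i‖ := lp.finsum_abs_le_norm _
      _ ≤ ‖v‖ := norm_le_pi_norm v i
  obtain ⟨f, u, hu, hfC⟩ := exists_pos_le_map_of_forall_le_norm hC hε hCε
  refine ⟨fun i y => f (Pi.single i (lp.single 1 y 1)), ‖f‖, u, hu, fun i y => ?_, fun x => ?_⟩
  · have hy : ‖(Pi.single i (lp.single 1 y 1) : ι → lp (fun _ : X => ℝ) 1)‖ = 1 := by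
      rw [Pi.norm_single, lp.norm_single (by norm_num), norm_one]
    simpa [hy] using f.le_opNorm (Pi.single i (lp.single 1 y 1))
  · have hfin : ∀ i, (support (r.defect (s i) (Pi.single x 1))).Finite := fun i =>
      r.finite_support_defect _ (single_mem_finsuppStdSimplex x).1
    let v : ι → lp (fun _ : X => ℝ) 1 := fun i =>
      ⟨r.defect (s i) (Pi.single x 1), (memℓp_zero (hfin i)).of_exponent_ge zero_le⟩
    calc u ≤ f v := hfC v ⟨Pi.single x 1, single_mem_finsuppStdSimplex x, fun i => rfl⟩
      _ = ∑ i, f (Pi.single i (v i)) := by rw [← map_sum, Finset.univ_sum_single]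
      _ = ∑ i, r.dualDefect (s i) _ x := Finset.sum_congr rfl fun i _ => by
        rw [← finsum_defect_single_mul]
        exact lp.map_eq_finsum_mul_map_single
          ((f : (ι → lp (fun _ : X => ℝ) 1) →ₗ[ℝ] ℝ).comp
            (LinearMap.single ℝ (fun _ : ι => lp (fun _ : X => ℝ) 1) i)) (v i) (hfin i)

end InverseSemigroupRep

theorem exists_finite_range_abs_sub_le {X : Type*} (φ : X → ℝ) {M η : ℝ}
    (hM : ∀ x, |φ x| ≤ M) (hη : 0 < η) :
    ∃ ψ : X → ℝ, (range ψ).Finite ∧ ∀ x, |ψ x - φ x| ≤ η := by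
  refine ⟨fun x => η * ⌊φ x / η⌋, ?_, fun x => ?_⟩
  · refine ((finite_Icc ⌊-M / η⌋ ⌊M / η⌋).image fun k : ℤ => η * k).subset ?_
    rintro _ ⟨x, rfl⟩
    refine ⟨⌊φ x / η⌋, ⟨Int.floor_mono ?_, Int.floor_mono ?_⟩, rfl⟩ <;>
      gcongr <;> linarith [abs_le.mp (hM x)]
  · have h₁ := Int.floor_le (φ x / η)
    have h₂ := Int.lt_floor_add_one (φ x / η)
    rw [abs_le]
    constructor
    · nlinarith [mul_div_cancel₀ (φ x) hη.ne']
    · nlinarith [mul_div_cancel₀ (φ x) hη.ne']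

namespace InverseSemigroupRep.SDomainMeasurableSet

open SimpleFunc

variable {S X : Type*} [Monoid S] [Star S] {r : InverseSemigroupRep S X}

theorem not_forall_le_sum_dualDefect_of_finite_range (hX : r.SDomainMeasurableSet univ)
    {ι : Type*} [Fintype ι] (s : ι → S) {φ : ι → X → ℝ} (hφ : ∀ i, (range (φ i)).Finite)
    {δ : ℝ} (hδ : 0 < δ) : ¬ ∀ x, δ ≤ ∑ i, r.dualDefect (s i) (φ i) x := by
  intro hle
  obtain ⟨μ, hμ, hμ_univ, hinv⟩ := hX
  have hfin : ∀ A, μ A ≠ ∞ := fun A =>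
    ((hμ.mono_s10 (subset_univ A)).trans_lt (hμ_univ ▸ ENNReal.one_lt_top)).ne
  let _ : MeasurableSpace X := ⊤
  let simple (e : X ≃. X) (i : ι) : SimpleFunc X ℝ :=
    ⟨e.pullback ℝ (φ i), fun _ => .of_discrete,
      ((hφ i).insert 0).subset (PEquiv.range_pullback_subset _ _)⟩
  let G := ∑ i, (simple (r.α (s i)).symm i - simple (r.α (star (s i) * s i)) i)
  have hG : finAddIntegral μ G = 0 := by
    rw [finAddIntegral_sum hμ hfin]
    refine Finset.sum_eq_zero fun i _ => ?_
    rw [finAddIntegral_sub hμ hfin, sub_eq_zero]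
    refine finAddIntegral_congr_preimage_singleton hμ.1 fun c hc => ?_
    simp only [simple, coe_mk]
    rw [PEquiv.pullback_symm_preimage_singleton _ _ hc, r.α_star_mul_self,
      PEquiv.pullback_self_trans_symm_preimage_singleton _ _ hc]
    exact hinv _ _ inter_subset_right
  have hδG : SimpleFunc.const X δ ≤ G := fun x => by
    simpa [G, coe_sum, simple, dualDefect] using hle x
  have := finAddIntegral_mono hμ hfin hδG
  rw [hG, finAddIntegral_const hμ.1, hμ_univ, ENNReal.toReal_one, one_mul] at this
  exact this.not_gt hδ

theorem not_forall_le_sum_dualDefect (hX : r.SDomainMeasurableSet univ)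
    {ι : Type*} [Fintype ι] (s : ι → S) {φ : ι → X → ℝ} {M : ℝ} (hφ : ∀ i x, |φ i x| ≤ M)
    {δ : ℝ} (hδ : 0 < δ) : ¬ ∀ x, δ ≤ ∑ i, r.dualDefect (s i) (φ i) x := by
  intro hle
  set η := δ / (4 * (Fintype.card ι + 1))
  have hη : 0 < η := by positivity
  choose ψ hψ hψφ using fun i => exists_finite_range_abs_sub_le (φ i) (hφ i) hη
  refine hX.not_forall_le_sum_dualDefect_of_finite_range s hψ (half_pos hδ) fun x => ?_
  have hclose : ∀ i, r.dualDefect (s i) (φ i) x - 2 * η ≤ r.dualDefect (s i) (ψ i) x :=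
    fun i => by linarith [abs_le.mp (r.abs_dualDefect_sub_le (s i) (hψφ i) x)]
  have hsum := Finset.sum_le_sum fun i (_ : i ∈ Finset.univ) => hclose i
  rw [Finset.sum_sub_distrib, Finset.sum_const, Finset.card_univ, nsmul_eq_mul] at hsum
  have hη_card : Fintype.card ι * (2 * η) ≤ δ / 2 := by
    simp only [η]
    field_simp
    nlinarith
  linarith [hle x]

end InverseSemigroupRep.SDomainMeasurableSet

theorem statement10_general {S X : Type*} [Monoid S] [Star S]
    (r : InverseSemigroupRep S X)
    (hX : r.SDomainMeasurableSet (Set.univ : Set X)) :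
    ∀ ε : ℝ, 0 < ε → ∀ 𝓕 : Finset S, ∃ h : X → ℝ,
      (Function.support h).Finite ∧ (∀ x, 0 ≤ h x) ∧ (∑ᶠ x, h x) = 1 ∧
      ∀ s ∈ 𝓕, (∑ᶠ x, |r.act (star s) h x - r.act (star s * s) h x|) < ε := by
  intro ε hε 𝓕
  by_contra! hcon
  obtain ⟨φ, M, δ, hδ, hφ, hle⟩ := r.exists_le_sum_dualDefect_of_le_defect
    (fun s : 𝓕 => (s : S)) hε fun h ⟨hfin, hnn, hsum⟩ => by
      obtain ⟨s, hs, hε_le⟩ := hcon h hfin hnn hsum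
      exact ⟨⟨s, hs⟩, by simpa only [r.act_star_sub_act_star_mul_self] using hε_le⟩
  exact hX.not_forall_le_sum_dualDefect _ hφ hδ hle

/-- If `X` is `S`-domain measurable then for every `ε > 0` and finite `𝓕 ⊆ S` there is a
finitely supported `h : X → [0,∞)` with `∑ₓ h(x) = 1` and
`∑ₓ |(s*·h)(x) − ((s*s)·h)(x)| < ε` for every `s ∈ 𝓕`. -/
theorem statement10 {S X : Type*} [Monoid S] [Star S] [IsInverseSemigroup S] [Countable S]
    (r : InverseSemigroupRep S X)
    (hX : r.SDomainMeasurableSet (Set.univ : Set X)) :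
    ∀ ε : ℝ, 0 < ε → ∀ 𝓕 : Finset S, ∃ h : X → ℝ,
      (Function.support h).Finite ∧ (∀ x, 0 ≤ h x) ∧ (∑ᶠ x, h x) = 1 ∧
      ∀ s ∈ 𝓕, (∑ᶠ x, |r.act (star s) h x - r.act (star s * s) h x|) < ε :=
  statement10_general r hX
end
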